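/- Let n ≥ 1, let Ω ⊂ ℝⁿ be an open set, and let u : Ω → ℝ be lower semicontinuous with inf_Ω u > −∞. Suppose that for every x̄ ∈ Ω there exists 0 < ε̄ < dist(x̄, ∂Ω) such that for every 0 < ε < ε̄ and every vector V ∈ ℝⁿ, the function w(x) := u(x) + V·x satisfies min_{B̄_ε(x̄)} w = min_{∂B_ε(x̄)} w. Then u ∈ A₁(Ω), i.e. u is viscosity 1-superaffine on Ω. -/

import Mathlib

open Filter Metric Set MeasureTheory Topology

attribute [local instance] Matrix.normedAddCommGroup Matrix.normedSpace

noncomputable section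

/-- The Hessian matrix `∇²u(x)` of `u : ℝⁿ → ℝ` at `x`. -/
def hessianMatrix (n : ℕ) (u : EuclideanSpace ℝ (Fin n) → ℝ)
    (x : EuclideanSpace ℝ (Fin n)) : Matrix (Fin n) (Fin n) ℝ :=
  fun i j => iteratedFDeriv ℝ 2 u x ![EuclideanSpace.single i 1, EuclideanSpace.single j 1]

/-- The eigenvalues `λ₁(M) ≤ ⋯ ≤ λₙ(M)` of a real symmetric matrix `M`, in
nondecreasing order (junk value if `M` is not symmetric): `sortedEig n M i = λ_{i+1}(M)`. -/
def sortedEig (n : ℕ) (M : Matrix (Fin n) (Fin n) ℝ) : Fin n → ℝ :=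
  if hM : M.IsHermitian then hM.eigenvalues ∘ Tuple.sort hM.eigenvalues else 0

/-- `λ₁(M) + ⋯ + λ_k(M)`, the sum of the `k` smallest eigenvalues of `M`. -/
def sumLowEig (n k : ℕ) (M : Matrix (Fin n) (Fin n) ℝ) : ℝ :=
  ∑ i ∈ Finset.univ.filter fun i : Fin n => (i : ℕ) < k, sortedEig n M i

/-- Condition (★) with radius `rbar`: for every vector `V`, the function
`w(x) = u(x) + V·x` satisfies `inf_{B_r ∖ {0}} w = min_{∂B_r} w` for all `0 < r < rbar`
(the minimum on the sphere is attained and equals the infimum over the punctured ball). -/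
def StarCond (n : ℕ) (u : EuclideanSpace ℝ (Fin n) → ℝ) (rbar : ℝ) : Prop :=
  ∀ V : EuclideanSpace ℝ (Fin n), ∀ r : ℝ, 0 < r → r < rbar →
    IsLeast ((fun x => u x + (inner ℝ V x : ℝ)) '' sphere (0 : EuclideanSpace ℝ (Fin n)) r)
      (sInf ((fun x => u x + (inner ℝ V x : ℝ)) '' (ball (0 : EuclideanSpace ℝ (Fin n)) r \ {0})))

/-- The matrix `(∂G/∂M_ij)` of partial derivatives of a function `G` of a matrix variable. -/
def derivMatrix (n : ℕ) (G : Matrix (Fin n) (Fin n) ℝ → ℝ) (M : Matrix (Fin n) (Fin n) ℝ) :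
    Matrix (Fin n) (Fin n) ℝ :=
  fun i j => fderiv ℝ G M (Matrix.single i j 1)

/-- `u` is viscosity `k`-superaffine on `Ω` (`u ∈ A_k(Ω)`): `u` is lower semicontinuous
and bounded below on `Ω`, and whenever a `C²` test function `φ` touches `u` from below at a
point of `Ω`, the sum of the `k` smallest eigenvalues of `∇²φ` there is `≤ 0`. -/
def ViscositySuperaffine (n k : ℕ) (Ω : Set (EuclideanSpace ℝ (Fin n)))
    (u : EuclideanSpace ℝ (Fin n) → ℝ) : Prop :=
  LowerSemicontinuousOn u Ω ∧ BddBelow (u '' Ω) ∧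
  ∀ φ : EuclideanSpace ℝ (Fin n) → ℝ, ContDiffOn ℝ 2 φ Ω → (∀ x ∈ Ω, φ x ≤ u x) →
    ∀ x ∈ Ω, φ x = u x → sumLowEig n k (hessianMatrix n φ x) ≤ 0

/-!
Suppose a `C²` function `φ` touches `u` from below at `x` while `λ₁(∇²φ(x)) > 0`. Then
`∇²φ(x) ≥ λ₁ · I`, so by the mean value theorem applied to `φ` minus its tangent plane, `φ` lies
strictly above that tangent plane on a punctured neighbourhood of `x`. Tilting by
`V = -∇φ(x)` turns this into: `φ + ⟪V, ·⟫` is strictly larger on a small sphere around `x` than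
at `x`. Since `φ ≤ u` with equality at `x`, the minimum of `u + ⟪V, ·⟫` over the closed ball is
at most its value at `x`, yet strictly below every value on the sphere, so it is not attained on
the sphere.
-/

open InnerProductSpace

section Quadratic

variable {ι : Type*} [Fintype ι] [DecidableEq ι]

theorem Matrix.IsHermitian.mul_norm_sq_le_inner_toEuclideanLin {M : Matrix ι ι ℝ}
    (hM : M.IsHermitian) {μ : ℝ} (hμ : ∀ i, μ ≤ hM.eigenvalues i) (x : EuclideanSpace ℝ ι) :
    μ * ‖x‖ ^ 2 ≤ ⟪x, Matrix.toEuclideanLin M x⟫_ℝ := by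
  set b := hM.eigenvectorBasis
  have hb : ∀ i, Matrix.toEuclideanLin M (b i) = hM.eigenvalues i • b i := fun i => by
    ext j; exact congrFun (hM.mulVec_eigenvectorBasis i) j
  have hsymm := Matrix.isSymmetric_toEuclideanLin_iff.2 hM
  calc μ * ‖x‖ ^ 2 = ∑ i, μ * ⟪x, b i⟫_ℝ ^ 2 := by
        rw [← real_inner_self_eq_norm_sq, ← b.sum_inner_mul_inner x x, Finset.mul_sum]
        simp_rw [real_inner_comm x, sq]
    _ ≤ ∑ i, hM.eigenvalues i * ⟪x, b i⟫_ℝ ^ 2 := by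
        gcongr with i; exact hμ i
    _ = ⟪x, Matrix.toEuclideanLin M x⟫_ℝ := by
        rw [← b.sum_inner_mul_inner x]
        refine Finset.sum_congr rfl fun i _ => ?_
        rw [← hsymm, hb, real_inner_smul_left, real_inner_comm x]
        ring

theorem ContinuousLinearMap.apply_self_eq_inner_toEuclideanLin
    (B : EuclideanSpace ℝ ι →L[ℝ] EuclideanSpace ℝ ι →L[ℝ] ℝ) (h : EuclideanSpace ℝ ι) :
    B h h = ⟪h, Matrix.toEuclideanLin
      (Matrix.of fun i j => B (EuclideanSpace.single i 1) (EuclideanSpace.single j 1)) h⟫_ℝ := by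
  have hh : h = ∑ i, h i • EuclideanSpace.single i (1 : ℝ) := by
    simpa using ((EuclideanSpace.basisFun ι ℝ).sum_repr h).symm
  conv_lhs => rw [hh]
  simp only [map_sum, map_smul, _root_.sum_apply, FunLike.coe_smul, Pi.smul_apply,
    smul_eq_mul, PiLp.inner_apply, Matrix.toLpLin_apply, Matrix.mulVec, dotProduct,
    Matrix.of_apply, RCLike.inner_apply, conj_trivial, Finset.sum_mul, Finset.mul_sum]
  rw [Finset.sum_comm]
  exact Finset.sum_congr rfl fun i _ => Finset.sum_congr rfl fun j _ => by ring

end Quadratic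

theorem sumLowEig_one_le_eigenvalues {n : ℕ} {M : Matrix (Fin n) (Fin n) ℝ}
    (hM : M.IsHermitian) (j : Fin n) : sumLowEig n 1 M ≤ hM.eigenvalues j := by
  obtain ⟨n, rfl⟩ := Nat.exists_eq_succ_of_ne_zero j.pos.ne'
  have hfilter : (Finset.univ.filter fun i : Fin (n + 1) => (i : ℕ) < 1) = {0} := by
    ext i; simp only [Finset.mem_filter, Finset.mem_univ, true_and, Finset.mem_singleton,
      Fin.ext_iff, Fin.val_zero, Nat.lt_one_iff]
  rw [sumLowEig, hfilter, Finset.sum_singleton, sortedEig, dif_pos hM]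
  obtain ⟨k, rfl⟩ := (Tuple.sort hM.eigenvalues).surjective j
  exact Tuple.monotone_sort _ (Fin.zero_le k)

section Hessian

variable {n : ℕ} {φ : EuclideanSpace ℝ (Fin n) → ℝ} {x : EuclideanSpace ℝ (Fin n)}

theorem hessianMatrix_eq_fderiv_fderiv : hessianMatrix n φ x =
    Matrix.of fun i j =>
      fderiv ℝ (fderiv ℝ φ) x (EuclideanSpace.single i 1) (EuclideanSpace.single j 1) := by
  ext i j
  rw [hessianMatrix, iteratedFDeriv_two_apply]
  rfl

theorem ContDiffAt.isHermitian_hessianMatrix (hφ : ContDiffAt ℝ 2 φ x) :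
    (hessianMatrix n φ x).IsHermitian := by
  ext i j
  simp only [hessianMatrix_eq_fderiv_fderiv, Matrix.conjTranspose_apply, Matrix.of_apply,
    star_trivial]
  exact hφ.isSymmSndFDerivAt (by simp [minSmoothness_of_isRCLikeNormedField]) _ _

theorem ContDiffAt.sumLowEig_one_hessianMatrix_mul_norm_sq_le (hφ : ContDiffAt ℝ 2 φ x)
    (h : EuclideanSpace ℝ (Fin n)) :
    sumLowEig n 1 (hessianMatrix n φ x) * ‖h‖ ^ 2 ≤ fderiv ℝ (fderiv ℝ φ) x h h := by
  have hH := hφ.isHermitian_hessianMatrix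
  rw [ContinuousLinearMap.apply_self_eq_inner_toEuclideanLin, ← hessianMatrix_eq_fderiv_fderiv]
  exact hH.mul_norm_sq_le_inner_toEuclideanLin (sumLowEig_one_le_eigenvalues hH) h

end Hessian

section SecondDerivative

variable {E : Type*} [NormedAddCommGroup E] [NormedSpace ℝ E]

theorem ContinuousLinearMap.half_mul_norm_sq_le_of_norm_sub_le {B : E →L[ℝ] E →L[ℝ] ℝ} {μ : ℝ}
    (hB : ∀ h, μ * ‖h‖ ^ 2 ≤ B h h) {L : E →L[ℝ] ℝ} {v : E} (hL : ‖L - B v‖ ≤ μ / 2 * ‖v‖) :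
    μ / 2 * ‖v‖ ^ 2 ≤ L v := by
  have hR : |(L - B v) v| ≤ μ / 2 * ‖v‖ * ‖v‖ :=
    ((L - B v).le_opNorm v).trans (mul_le_mul_of_nonneg_right hL (norm_nonneg v))
  have hsplit : L v = (L - B v) v + B v v := by simp
  nlinarith [neg_abs_le ((L - B v) v), hB v]

theorem ContDiffAt.eventually_add_fderiv_sub_lt {φ : E → ℝ} {x : E} {μ : ℝ}
    (hφ : ContDiffAt ℝ 2 φ x) (hμ : 0 < μ)
    (hB : ∀ h, μ * ‖h‖ ^ 2 ≤ fderiv ℝ (fderiv ℝ φ) x h h) :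
    ∀ᶠ y in 𝓝[≠] x, φ x + fderiv ℝ φ x (y - x) < φ y := by
  set g := fderiv ℝ φ
  have hg : HasFDerivAt g (fderiv ℝ g x) x :=
    ((hφ.fderiv_right (m := 1) le_rfl).differentiableAt one_ne_zero).hasFDerivAt
  have hφ' : ∀ᶠ y in 𝓝 x, HasFDerivAt φ (g y) y :=
    (hφ.eventually (by simp)).mono fun y hy => (hy.differentiableAt two_ne_zero).hasFDerivAt
  obtain ⟨δ, hδ, hball⟩ :=
    Metric.eventually_nhds_iff_ball.1 (hφ'.and (hg.isLittleO.def (half_pos hμ)))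
  have hmono : ∀ z ∈ ball x δ, μ / 2 * ‖z - x‖ ^ 2 ≤ (g z - g x) (z - x) := fun z hz =>
    ContinuousLinearMap.half_mul_norm_sq_le_of_norm_sub_le hB (hball z hz).2
  filter_upwards [self_mem_nhdsWithin, nhdsWithin_le_nhds (ball_mem_nhds x hδ)] with y hyx hy
  set h := y - x
  have hseg : ∀ t ∈ Icc (0 : ℝ) 1, x + t • h ∈ ball x δ := fun t ht => by
    rw [mem_ball, dist_eq_norm, add_sub_cancel_left, norm_smul, Real.norm_of_nonneg ht.1]
    exact (mul_le_of_le_one_left (norm_nonneg _) ht.2).trans_lt (mem_ball_iff_norm.1 hy)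
  have hderiv : ∀ t ∈ Icc (0 : ℝ) 1, HasDerivAt (fun t => φ (x + t • h) - t * g x h)
      (g (x + t • h) h - g x h) t := fun t ht => by
    have hline : HasDerivAt (fun s : ℝ => x + s • h) h t := by
      simpa using ((hasDerivAt_id t).smul_const h).const_add x
    exact ((hball _ (hseg t ht)).1.comp_hasDerivAt t hline).sub
      (by simpa using (hasDerivAt_id t).mul_const (g x h))
  obtain ⟨c, hc, hslope⟩ := exists_hasDerivAt_eq_slope _ _ zero_lt_one
    (fun t ht => (hderiv t ht).continuousAt.continuousWithinAt)
    (fun t ht => hderiv t (Ioo_subset_Icc_self ht))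
  have hpos : 0 < g (x + c • h) h - g x h := by
    have := hmono _ (hseg c (Ioo_subset_Icc_self hc))
    rw [add_sub_cancel_left, norm_smul, Real.norm_of_nonneg hc.1.le, map_smul, smul_eq_mul,
      sub_apply] at this
    have hh : 0 < ‖h‖ := norm_pos_iff.2 (sub_ne_zero.2 hyx)
    nlinarith [mul_pos (mul_pos hμ hc.1) (mul_pos hh hh), hc.1]
  simp only [one_smul, zero_smul, add_zero, one_mul, zero_mul, sub_zero, div_one] at hslope
  rw [show x + h = y from add_sub_cancel x y] at hslope
  linarith

end SecondDerivative

theorem stmt_14_general (n : ℕ)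
    (Ω : Set (EuclideanSpace ℝ (Fin n))) (hΩopen : IsOpen Ω)
    (u : EuclideanSpace ℝ (Fin n) → ℝ)
    (hlsc : LowerSemicontinuousOn u Ω) (hbdd : BddBelow (u '' Ω))
    (h : ∀ x ∈ Ω, ∃ εb : ℝ, 0 < εb ∧ closedBall x εb ⊆ Ω ∧
      ∀ ε : ℝ, 0 < ε → ε < εb → ∀ V : EuclideanSpace ℝ (Fin n),
        ∃ m : ℝ, IsLeast ((fun y => u y + (inner ℝ V y : ℝ)) '' closedBall x ε) m ∧
          IsLeast ((fun y => u y + (inner ℝ V y : ℝ)) '' sphere x ε) m) :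
    ViscositySuperaffine n 1 Ω u := by
  refine ⟨hlsc, hbdd, fun φ hφ hφu x hx hφx => ?_⟩
  by_contra! hpos
  have hφ₂ : ContDiffAt ℝ 2 φ x := (hφ x hx).contDiffAt (hΩopen.mem_nhds hx)
  obtain ⟨δ, hδ, habove⟩ := Metric.mem_nhdsWithin_iff.1
    (hφ₂.eventually_add_fderiv_sub_lt hpos hφ₂.sumLowEig_one_hessianMatrix_mul_norm_sq_le)
  obtain ⟨εb, hεb, hεbΩ, hmin⟩ := h x hx
  set ε := min (εb / 2) (δ / 2)
  have hε : 0 < ε := lt_min (half_pos hεb) (half_pos hδ)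
  obtain ⟨m, ⟨-, hm⟩, ⟨y, hy, hym⟩, -⟩ :=
    hmin ε hε ((min_le_left _ _).trans_lt (half_lt_self hεb)) (-gradient φ x)
  have hyΩ : y ∈ Ω := hεbΩ (closedBall_subset_closedBall ((min_le_left _ _).trans
    (half_le_self hεb.le)) (sphere_subset_closedBall hy))
  have hφy : φ x + fderiv ℝ φ x (y - x) < φ y := habove ⟨mem_ball.2 (by
    rw [mem_sphere.1 hy]; exact (min_le_right _ _).trans_lt (half_lt_self hδ)),
    ne_of_mem_sphere hy hε.ne'⟩
  have hmx := hm ⟨x, mem_closedBall_self hε.le, rfl⟩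
  have hgrad : ∀ z, ⟪gradient φ x, z⟫_ℝ = fderiv ℝ φ x z := fun z => by
    rw [← toDual_gradient, toDual_apply_apply]
  simp only [inner_neg_left, hgrad, map_sub] at hmx hym hφy
  linarith [hφu y hyΩ]

/-- Lemma D.3: the local minimum-principle characterization implies
viscosity 1-superaffinity. -/
theorem stmt_14 (n : ℕ) (hn : 1 ≤ n)
    (Ω : Set (EuclideanSpace ℝ (Fin n))) (hΩopen : IsOpen Ω)
    (u : EuclideanSpace ℝ (Fin n) → ℝ)
    (hlsc : LowerSemicontinuousOn u Ω) (hbdd : BddBelow (u '' Ω))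
    (h : ∀ x ∈ Ω, ∃ εb : ℝ, 0 < εb ∧ closedBall x εb ⊆ Ω ∧
      ∀ ε : ℝ, 0 < ε → ε < εb → ∀ V : EuclideanSpace ℝ (Fin n),
        ∃ m : ℝ, IsLeast ((fun y => u y + (inner ℝ V y : ℝ)) '' closedBall x ε) m ∧
          IsLeast ((fun y => u y + (inner ℝ V y : ℝ)) '' sphere x ε) m) :
    ViscositySuperaffine n 1 Ω u :=
  stmt_14_general n Ω hΩopen u hlsc hbdd h
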